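/- arXiv:1308.4571 — 3 statements merged into one kernel-verified Lean document; each statement's English description precedes it below -/
import Mathlib

section
/- Let $\mu$ be a finite Borel measure on a cube $F \subset \mathbb{R}^n$ and let $b \in L^2(\mu)$ be supported on $F$ with $\int_F b\,d\mu = \mu(F)$ and $\int_F |b|^2\,d\mu \le A\,\mu(F)$ for some constant $A \ge 1$. If $\{Q_i\}_i$ is a countable disjoint collection of subsets of $F$ such that $|\frac{1}{\mu(Q_i)}\int_{Q_i} b\,d\mu| < 1/2$ for every $i$ (with $\mu(Q_i) > 0$), then $\mu(\bigcup_i Q_i) \le (1 - \frac{1}{4A})\mu(F)$. -/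
open MeasureTheory

/-!
Let `U = ⋃ i, Q i`. Since the average of `b` over each `Q i` is below `1/2`, countable additivity
gives `∫_U b ≤ μ(U)/2`, hence `∫_{F \ U} b ≥ μ(F) - μ(U)/2 ≥ μ(F)/2`. Cauchy–Schwarz on `F \ U`
bounds the square of the left side by `A μ(F) μ(F \ U)`, so `μ(F) ≤ 4A μ(F \ U)`.
-/

section

variable {X : Type*} [MeasurableSpace X] {μ : Measure X} [IsFiniteMeasure μ] {f : X → ℝ}

theorem sq_integral_le_measureReal_mul_integral_sq (hf : MemLp f 2 μ) :
    (∫ x, f x ∂μ) ^ 2 ≤ μ.real Set.univ * ∫ x, f x ^ 2 ∂μ := by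
  have hf1 : Integrable f μ := hf.integrable one_le_two
  have hf2 : Integrable (fun x => f x ^ 2) μ := hf.integrable_sq
  -- `t ↦ ∫ (f - t)²` is a nonnegative quadratic polynomial, so its discriminant is `≤ 0`
  have hquad : ∀ t : ℝ,
      0 ≤ μ.real Set.univ * (t * t) + (-2 * ∫ x, f x ∂μ) * t + ∫ x, f x ^ 2 ∂μ := fun t =>
    calc 0 ≤ ∫ x, (f x - t) ^ 2 ∂μ := integral_nonneg fun x => sq_nonneg _
      _ = ∫ x, (f x ^ 2 - 2 * t * f x) + t ^ 2 ∂μ := by congr with x; ring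
      _ = _ := by
        rw [integral_add (f := fun x => f x ^ 2 - 2 * t * f x)
            (hf2.sub (hf1.const_mul _)) (integrable_const _),
          integral_sub hf2 (hf1.const_mul _), integral_const_mul, integral_const, smul_eq_mul]
        ring
  have hdisc := discrim_le_zero hquad
  rw [discrim] at hdisc
  linarith

theorem sq_setIntegral_le_measureReal_mul_setIntegral_sq (hf : MemLp f 2 μ) (s : Set X) :
    (∫ x in s, f x ∂μ) ^ 2 ≤ μ.real s * ∫ x in s, f x ^ 2 ∂μ := by
  simpa using sq_integral_le_measureReal_mul_integral_sq (hf.restrict s)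

theorem setIntegral_le_mul_measureReal_of_average_lt {s : Set X} {c : ℝ}
    (h : (∫ x in s, f x ∂μ) / μ.real s < c) :
    ∫ x in s, f x ∂μ ≤ c * μ.real s := by
  rcases (measureReal_nonneg : 0 ≤ μ.real s).eq_or_lt with hs | hs
  · rw [← hs, mul_zero, setIntegral_measure_zero]
    exact (measureReal_eq_zero_iff (measure_ne_top μ s)).mp hs.symm
  · exact ((div_lt_iff₀ hs).mp h).le

theorem setIntegral_iUnion_le_mul_measureReal {Q : ℕ → Set X} (hQm : ∀ i, MeasurableSet (Q i))
    (hdisj : Pairwise (Function.onFun Disjoint Q)) (hf : Integrable f μ) {c : ℝ}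
    (h : ∀ i, ∫ x in Q i, f x ∂μ ≤ c * μ.real (Q i)) :
    ∫ x in ⋃ i, Q i, f x ∂μ ≤ c * μ.real (⋃ i, Q i) := by
  have hc := hasSum_integral_iUnion hQm hdisj (integrable_const c).integrableOn (μ := μ)
  simp only [setIntegral_const, smul_eq_mul, mul_comm _ c] at hc h
  exact hasSum_le h (hasSum_integral_iUnion hQm hdisj hf.integrableOn) hc

end

theorem le_one_sub_inv_mul_of_sq_le {A m u I : ℝ} (hA : 0 < A) (hu : 0 ≤ u) (hum : u ≤ m)
    (hI : I ≤ 1 / 2 * u) (hsq : (m - I) ^ 2 ≤ A * m * (m - u)) :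
    u ≤ (1 - 1 / (4 * A)) * m := by
  have hhalf : (m / 2) ^ 2 ≤ A * m * (m - u) :=
    (pow_le_pow_left₀ (by linarith) (by linarith) 2).trans hsq
  rcases (hu.trans hum).eq_or_lt with rfl | hm
  · linarith
  · have : m ≤ 4 * A * (m - u) := by nlinarith
    rw [sub_mul, one_mul, one_div_mul_eq_div, le_sub_iff_add_le, ← le_sub_iff_add_le',
      div_le_iff₀ (by positivity)]
    linarith

theorem stmt0_general {X : Type*} [MeasurableSpace X] (μ : Measure X) [IsFiniteMeasure μ]
    (F : Set X) (b : X → ℝ) (A : ℝ) (hA : 1 ≤ A)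
    (hbmem : MemLp b 2 μ)
    (hbmean : ∫ x in F, b x ∂μ = (μ F).toReal)
    (hbL2 : ∫ x in F, (b x) ^ 2 ∂μ ≤ A * (μ F).toReal)
    (Q : ℕ → Set X) (hQm : ∀ i, MeasurableSet (Q i))
    (hQF : ∀ i, Q i ⊆ F)
    (hdisj : Pairwise (Function.onFun Disjoint Q))
    (hsmall : ∀ i, |(∫ x in Q i, b x ∂μ) / (μ (Q i)).toReal| < 1 / 2) :
    (μ (⋃ i, Q i)).toReal ≤ (1 - 1 / (4 * A)) * (μ F).toReal := by
  simp only [← measureReal_def] at hbmean hbL2 hsmall ⊢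
  set U := ⋃ i, Q i
  have hUm : MeasurableSet U := .iUnion hQm
  have hUF : U ⊆ F := Set.iUnion_subset hQF
  have hbint : Integrable b μ := hbmem.integrable one_le_two
  have hU : ∫ x in U, b x ∂μ ≤ 1 / 2 * μ.real U :=
    setIntegral_iUnion_le_mul_measureReal hQm hdisj hbint fun i =>
      setIntegral_le_mul_measureReal_of_average_lt ((le_abs_self _).trans_lt (hsmall i))
  have hL2 : ∫ x in F \ U, b x ^ 2 ∂μ ≤ A * μ.real F :=
    (setIntegral_mono_set hbmem.integrable_sq.integrableOn
      (.of_forall fun x => sq_nonneg _) Set.sdiff_subset.eventuallyLE).trans hbL2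
  have hCS : (∫ x in F \ U, b x ∂μ) ^ 2 ≤ A * μ.real F * μ.real (F \ U) :=
    calc (∫ x in F \ U, b x ∂μ) ^ 2 ≤ μ.real (F \ U) * ∫ x in F \ U, b x ^ 2 ∂μ :=
          sq_setIntegral_le_measureReal_mul_setIntegral_sq hbmem _
      _ ≤ μ.real (F \ U) * (A * μ.real F) := by gcongr
      _ = A * μ.real F * μ.real (F \ U) := mul_comm _ _
  rw [setIntegral_sdiff hUm hbint.integrableOn hUF, hbmean, measureReal_sdiff hUF hUm] at hCS
  exact le_one_sub_inv_mul_of_sq_le (one_pos.trans_le hA) measureReal_nonneg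
    (measureReal_mono hUF) hU hCS

/-- Accretivity/stopping-time estimate: if `b` is supported on `F`, has
mean `μ F` over `F` and `L²` norm squared at most `A·μ F`, and `{Q i}` is a disjoint
collection of subsets of `F` of positive measure on which the average of `b` is small,
then the `Q i` capture at most `(1 - 1/(4A))` of the mass of `F`. -/
theorem stmt0 {X : Type*} [MeasurableSpace X] (μ : Measure X) [IsFiniteMeasure μ]
    (F : Set X) (hF : MeasurableSet F) (b : X → ℝ) (A : ℝ) (hA : 1 ≤ A)
    (hbmem : MemLp b 2 μ)
    (hbsupp : ∀ x ∉ F, b x = 0)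
    (hbmean : ∫ x in F, b x ∂μ = (μ F).toReal)
    (hbL2 : ∫ x in F, (b x) ^ 2 ∂μ ≤ A * (μ F).toReal)
    (Q : ℕ → Set X) (hQm : ∀ i, MeasurableSet (Q i))
    (hQF : ∀ i, Q i ⊆ F)
    (hdisj : Pairwise (Function.onFun Disjoint Q))
    (hpos : ∀ i, 0 < μ (Q i))
    (hsmall : ∀ i, |(∫ x in Q i, b x ∂μ) / (μ (Q i)).toReal| < 1 / 2) :
    (μ (⋃ i, Q i)).toReal ≤ (1 - 1 / (4 * A)) * (μ F).toReal :=
  stmt0_general μ F b A hA hbmem hbmean hbL2 Q hQm hQF hdisj hsmall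
end

section
/- Let $\mu$ be a Borel measure on $\mathbb{R}^n$ with $\mu(B(x,r)) \le C r^m$ for all $x, r$. Let $s_t(x,y)$ satisfy the Hölder condition $|s_t(x,y) - s_t(x,z)| \le C\frac{|y-z|^\alpha}{(t+|x-y|)^{m+\alpha}}$ for $|y-z| < t/2$. Let $Q, R$ be cubes with $\ell(Q) < \ell(R)$, let $g \in L^2(\mu)$ be supported on $Q$ with $\int g\,d\mu = 0$, and let $(x,t) \in R \times (\ell(R)/2, \ell(R))$. Then $|\theta_t g(x)| \lesssim \frac{\ell(Q)^{\alpha/2}\ell(R)^{\alpha/2}}{D(Q,R)^{m+\alpha}}\mu(Q)^{1/2}\|g\|_{L^2(\mu)}$, where $\theta_t g(x) = \int s_t(x,y)g(y)\,d\mu(y)$ and $D(Q,R) = \ell(Q) + \ell(R) + d(Q,R)$. -/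
open MeasureTheory Set
open scoped ENNReal NNReal

/-- An axis-parallel cube in `ℝⁿ` with lower corner `c` and side length `l`. -/
structure RCube (n : ℕ) where
  c : EuclideanSpace ℝ (Fin n)
  l : ℝ

namespace RCube

/-- The underlying set of the cube. -/
def set {n : ℕ} (Q : RCube n) : Set (EuclideanSpace ℝ (Fin n)) :=
  {x | ∀ i, Q.c i ≤ x i ∧ x i ≤ Q.c i + Q.l}

end RCube

/-- The distance `d(S,T)` between two sets. -/
noncomputable def sDist {X : Type*} [PseudoMetricSpace X] (S T : Set X) : ℝ :=
  sInf {d | ∃ x ∈ S, ∃ y ∈ T, d = dist x y}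

/-- The long distance `D(Q,R) = ℓ(Q) + ℓ(R) + d(Q,R)`. -/
noncomputable def DD {n : ℕ} (Q R : RCube n) : ℝ := Q.l + R.l + sDist Q.set R.set

/-! Since `∫ g dμ = 0`, `θ_t g(x) = ∫_Q (s_t(x,y) - s_t(x,c)) g(y) dμ(y)` for the corner `c` of `Q`.
The Hölder condition only applies at distances `< t/2`, while `|y - c|` may be as large as
`√n ℓ(Q)`; chaining it along the segment `[c, y] ⊆ Q` in `4n + 4` steps of length `≤ ℓ(Q)/4 < t/2`,
and using `t + |x - z| ≥ D(Q,R)/4` for `x ∈ R`, `z ∈ Q`, bounds the bracket by a multiple of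
`ℓ(Q)^α / D(Q,R)^(m+α) ≤ ℓ(Q)^(α/2) ℓ(R)^(α/2) / D(Q,R)^(m+α)`. Cauchy–Schwarz on `Q` gives
`∫ |g| dμ ≤ μ(Q)^(1/2) ‖g‖₂`. -/

open Filter Topology

namespace RCube

variable {n : ℕ} (Q : RCube n)

lemma isClosed_set : IsClosed Q.set := by
  have hi (i : Fin n) : Continuous fun x : EuclideanSpace ℝ (Fin n) => x i := by fun_prop
  simp only [set, Set.ofPred_forall, Set.ofPred_and]
  exact isClosed_iInter fun i =>
    (isClosed_le continuous_const (hi i)).inter (isClosed_le (hi i) continuous_const)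

lemma convex_set : Convex ℝ Q.set := by
  intro y hy z hz a b ha hb hab i
  simp only [PiLp.add_apply, PiLp.smul_apply, smul_eq_mul]
  have hc : Q.c i = a * Q.c i + b * Q.c i := by rw [← add_mul, hab, one_mul]
  constructor <;> nlinarith [mul_le_mul_of_nonneg_left (hy i).1 ha,
    mul_le_mul_of_nonneg_left (hz i).1 hb, mul_le_mul_of_nonneg_left (hy i).2 ha,
    mul_le_mul_of_nonneg_left (hz i).2 hb]

lemma c_mem_set (hl : 0 ≤ Q.l) : Q.c ∈ Q.set :=
  fun _ => ⟨le_rfl, by linarith⟩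

lemma dist_le_sqrt_mul (hl : 0 ≤ Q.l) {y z : EuclideanSpace ℝ (Fin n)} (hy : y ∈ Q.set)
    (hz : z ∈ Q.set) : dist y z ≤ √n * Q.l := by
  rw [EuclideanSpace.dist_eq, ← Real.sqrt_sq hl, ← Real.sqrt_mul (Nat.cast_nonneg n)]
  gcongr
  calc ∑ i, dist (y i) (z i) ^ 2 ≤ ∑ _i : Fin n, Q.l ^ 2 := Finset.sum_le_sum fun i _ => ?_
    _ = n * Q.l ^ 2 := by simp
  rw [Real.dist_eq, sq_abs]
  exact sq_le_sq' (by linarith [hy i, hz i]) (by linarith [hy i, hz i])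

lemma set_subset_ball (hl : 0 ≤ Q.l) : Q.set ⊆ Metric.ball Q.c (√n * Q.l + 1) := fun _ hy =>
  Metric.mem_ball.2 ((Q.dist_le_sqrt_mul hl hy (Q.c_mem_set hl)).trans_lt (lt_add_one _))

end RCube

lemma sDist_nonneg {X : Type*} [PseudoMetricSpace X] (S T : Set X) : 0 ≤ sDist S T :=
  Real.sInf_nonneg fun _ ⟨_, _, _, _, hd⟩ => hd ▸ dist_nonneg

lemma sDist_le_dist {X : Type*} [PseudoMetricSpace X] {S T : Set X} {a b : X}
    (ha : a ∈ S) (hb : b ∈ T) : sDist S T ≤ dist a b :=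
  csInf_le ⟨0, fun _ ⟨_, _, _, _, hd⟩ => hd ▸ dist_nonneg⟩ ⟨a, ha, b, hb, rfl⟩

lemma DD_pos {n : ℕ} {Q R : RCube n} (hQ : 0 < Q.l) (hR : 0 < R.l) : 0 < DD Q R := by
  unfold DD
  linarith [sDist_nonneg Q.set R.set]

theorem continuous_of_abs_sub_le_mul_rpow {X : Type*} [PseudoMetricSpace X] {f : X → ℝ}
    {K α δ : ℝ} (hα : 0 < α) (hδ : 0 < δ)
    (hf : ∀ a b, dist a b < δ → |f a - f b| ≤ K * dist a b ^ α) : Continuous f := by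
  refine continuous_iff_continuousAt.2 fun b => tendsto_iff_dist_tendsto_zero.2 ?_
  have hlim : Tendsto (fun a => K * dist a b ^ α) (𝓝 b) (𝓝 0) := by
    have := (((continuous_id.dist (continuous_const (y := b))).rpow_const
      fun _ => Or.inr hα.le).const_mul K).tendsto b
    simpa [Real.zero_rpow hα.ne'] using this
  refine squeeze_zero' (Eventually.of_forall fun _ => dist_nonneg) ?_ hlim
  filter_upwards [Metric.ball_mem_nhds b hδ] with a ha
  exact hf a b ha

theorem abs_sub_le_of_segment {E : Type*} [NormedAddCommGroup E] [NormedSpace ℝ E] (f : E → ℝ)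
    {c y : E} {N : ℕ} (hN : 0 < N) {ε : ℝ}
    (hf : ∀ a ∈ segment ℝ c y, ∀ b ∈ segment ℝ c y, dist a b ≤ dist c y / N → |f a - f b| ≤ ε) :
    |f y - f c| ≤ N * ε := by
  set p : ℕ → E := fun k => AffineMap.lineMap c y ((k : ℝ) / N)
  have hNR : (0 : ℝ) < N := Nat.cast_pos.2 hN
  have hmem : ∀ k ≤ N, p k ∈ segment ℝ c y := fun k hk =>
    lineMap_mem_segment ℝ c y ⟨by positivity, div_le_one_of_le₀ (by exact_mod_cast hk) hNR.le⟩
  have hstep : ∀ k, dist (p (k + 1)) (p k) = dist c y / N := by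
    intro k
    rw [dist_lineMap_lineMap, Real.dist_eq, Nat.cast_succ, add_div, add_sub_cancel_left,
      abs_of_pos (by positivity), one_div_mul_eq_div]
  calc |f y - f c| = |∑ k ∈ Finset.range N, (f (p (k + 1)) - f (p k))| := by
        rw [Finset.sum_range_sub (fun k => f (p k))]
        simp [p, hNR.ne']
    _ ≤ ∑ k ∈ Finset.range N, |f (p (k + 1)) - f (p k)| := Finset.abs_sum_le_sum_abs _ _
    _ ≤ ∑ _k ∈ Finset.range N, ε := Finset.sum_le_sum fun k hk =>
        hf _ (hmem _ (Finset.mem_range.1 hk)) _ (hmem _ (Finset.mem_range.1 hk).le) (hstep k).le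
    _ = N * ε := by simp

section Integrals

variable {X : Type*} [MeasurableSpace X] {μ : Measure X} {S : Set X} {g : X → ℝ}

theorem MeasureTheory.MemLp.integrable_of_eq_zero_off (hS : MeasurableSet S) (hμS : μ S ≠ ⊤)
    (hg : MemLp g 2 μ) (hsupp : ∀ y ∉ S, g y = 0) : Integrable g μ := by
  have : IsFiniteMeasure (μ.restrict S) := isFiniteMeasure_restrict.2 hμS
  rw [← indicator_eq_self.2 (Function.support_subset_iff'.2 hsupp), integrable_indicator_iff hS]
  exact (hg.restrict S).integrable one_le_two

theorem integral_abs_le_sqrt_measure_mul_sqrt_integral_sq (hS : MeasurableSet S)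
    (hμS : μ S ≠ ⊤) (hg : MemLp g 2 μ) (hsupp : ∀ y ∉ S, g y = 0) :
    ∫ y, |g y| ∂μ ≤ √(μ S).toReal * √(∫ y, g y ^ 2 ∂μ) := by
  have h2 : ENNReal.ofReal 2 = 2 := by norm_num
  have hS2 : MemLp (S.indicator fun _ => (1 : ℝ)) (ENNReal.ofReal 2) μ := by
    rw [h2]; exact memLp_indicator_const 2 hS 1 (Or.inr hμS)
  have hCS := integral_mul_norm_le_Lp_mul_Lq Real.HolderConjugate.two_two hS2 (by rwa [h2])
  have hL (y : X) : ‖S.indicator (fun _ => (1 : ℝ)) y‖ * ‖g y‖ = |g y| := by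
    by_cases hy : y ∈ S <;> simp [hy, hsupp]
  have hR (y : X) : ‖S.indicator (fun _ => (1 : ℝ)) y‖ ^ (2 : ℝ) = S.indicator 1 y := by
    by_cases hy : y ∈ S <;> simp [hy]
  simp only [hL, hR, integral_indicator_one hS] at hCS
  simp only [Real.norm_eq_abs, Real.rpow_two, sq_abs] at hCS
  rwa [Real.sqrt_eq_rpow, Real.sqrt_eq_rpow]

theorem abs_integral_mul_le_of_integral_eq_zero {f : X → ℝ} {a K : ℝ}
    (hf : AEStronglyMeasurable f μ) (hg : Integrable g μ) (hmean : ∫ y, g y ∂μ = 0)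
    (hsupp : ∀ y ∉ S, g y = 0) (hK : ∀ y ∈ S, |f y - a| ≤ K) :
    |∫ y, f y * g y ∂μ| ≤ K * ∫ y, |g y| ∂μ := by
  have hbound : ∀ y, |(f y - a) * g y| ≤ K * |g y| := by
    intro y
    by_cases hy : y ∈ S
    · rw [abs_mul]; exact mul_le_mul_of_nonneg_right (hK y hy) (abs_nonneg _)
    · simp [hsupp y hy]
  have hint : Integrable (fun y => (f y - a) * g y) μ :=
    (hg.abs.const_mul K).mono' ((hf.sub aestronglyMeasurable_const).mul hg.1)
      (ae_of_all _ hbound)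
  have hshift : ∫ y, f y * g y ∂μ = ∫ y, (f y - a) * g y ∂μ := by
    have : (fun y => f y * g y) = fun y => (f y - a) * g y + a * g y := by ext; ring
    rw [this, integral_add hint (hg.const_mul a), integral_const_mul, hmean, mul_zero, add_zero]
  calc |∫ y, f y * g y ∂μ| = |∫ y, (f y - a) * g y ∂μ| := by rw [hshift]
    _ ≤ ∫ y, |(f y - a) * g y| ∂μ := abs_integral_le_integral_abs
    _ ≤ ∫ y, K * |g y| ∂μ := integral_mono hint.abs (hg.abs.const_mul K) hbound
    _ = K * ∫ y, |g y| ∂μ := integral_const_mul K _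

end Integrals

theorem RCube.abs_sub_le_of_holder {n : ℕ} {Q R : RCube n} (hQ : 0 < Q.l) (hQR : Q.l < R.l)
    {x : EuclideanSpace ℝ (Fin n)} (hx : x ∈ R.set) {t : ℝ} (ht : R.l / 2 < t)
    {f : EuclideanSpace ℝ (Fin n) → ℝ} {α β C : ℝ} (hα : 0 ≤ α) (hβ : 0 ≤ β) (hC : 0 ≤ C)
    (hf : ∀ y z, dist y z < t / 2 → |f y - f z| ≤ C * dist y z ^ α / (t + dist x y) ^ β)
    {y : EuclideanSpace ℝ (Fin n)} (hy : y ∈ Q.set) :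
    |f y - f Q.c| ≤ (4 * n + 4) * (4 ^ β * C * Q.l ^ α / DD Q R ^ β) := by
  have hc := Q.c_mem_set hQ.le
  have hDD := DD_pos hQ (hQ.trans hQR)
  have hseg : segment ℝ Q.c y ⊆ Q.set := Q.convex_set.segment_subset hc hy
  have hstep : dist Q.c y / (4 * n + 4 : ℕ) ≤ Q.l / 4 := by
    have hdiam := Q.dist_le_sqrt_mul hQ.le hc hy
    have hsqrt : √n ≤ n + 1 := Real.sqrt_le_iff.2 ⟨by positivity, by nlinarith⟩
    rw [div_le_iff₀ (by positivity)]
    push_cast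
    nlinarith
  have := abs_sub_le_of_segment f (c := Q.c) (y := y) (N := 4 * n + 4) (by positivity)
    (ε := 4 ^ β * C * Q.l ^ α / DD Q R ^ β) fun a ha b hb hab => ?_
  · exact_mod_cast this
  have hfar : DD Q R / 4 ≤ t + dist x a := by
    have := sDist_le_dist (hseg ha) hx
    rw [dist_comm] at this
    unfold DD
    linarith [sDist_nonneg Q.set R.set]
  calc |f a - f b| ≤ C * dist a b ^ α / (t + dist x a) ^ β := hf a b (by linarith)
    _ ≤ C * Q.l ^ α / (DD Q R / 4) ^ β := by
        gcongr
        linarith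
    _ = 4 ^ β * C * Q.l ^ α / DD Q R ^ β := by
        rw [Real.div_rpow hDD.le (by norm_num)]
        field_simp

/-- Standard estimate for the action of a square-function kernel on a
mean-zero function `g` supported on a cube `Q` smaller than `R`, at Whitney points
`(x,t) ∈ W_R`:
`|θ_t g(x)| ≲ ℓ(Q)^{α/2} ℓ(R)^{α/2} D(Q,R)^{-(m+α)} μ(Q)^{1/2} ‖g‖_{L²(μ)}`. -/
theorem stmt8 (n : ℕ) (m α C : ℝ) (hm : 0 < m) (hα : 0 < α) (hC : 0 < C) :
    ∃ C' : ℝ, 0 < C' ∧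
    ∀ (μ : Measure (EuclideanSpace ℝ (Fin n)))
      (s : ℝ → EuclideanSpace ℝ (Fin n) → EuclideanSpace ℝ (Fin n) → ℝ),
    (∀ x r, 0 < r → μ (Metric.ball x r) ≤ ENNReal.ofReal (C * r ^ m)) →
    (∀ t x y z, 0 < t → dist y z < t / 2 →
      |s t x y - s t x z| ≤ C * (dist y z) ^ α / (t + dist x y) ^ (m + α)) →
    ∀ (Q R : RCube n), 0 < Q.l → 0 < R.l → Q.l < R.l →
    ∀ g : EuclideanSpace ℝ (Fin n) → ℝ,
    (∀ y ∉ Q.set, g y = 0) → MemLp g 2 μ → (∫ y, g y ∂μ) = 0 →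
    ∀ x ∈ R.set, ∀ t ∈ Ioo (R.l / 2) R.l,
    |∫ y, s t x y * g y ∂μ|
      ≤ C' * (Q.l ^ (α / 2) * R.l ^ (α / 2) / (DD Q R) ^ (m + α))
        * Real.sqrt (μ Q.set).toReal * Real.sqrt (∫ y, (g y) ^ 2 ∂μ) := by
  refine ⟨(4 * n + 4) * 4 ^ (m + α) * C, by positivity, ?_⟩
  rintro μ s hgrow hs Q R hQ hR hQR g hsupp hg hmean x hx t ⟨ht, -⟩
  have ht₀ : 0 < t := lt_trans (by linarith) ht
  have hQm : MeasurableSet Q.set := Q.isClosed_set.measurableSet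
  have hμQ : μ Q.set ≠ ⊤ := ne_top_of_le_ne_top ENNReal.ofReal_ne_top
    ((measure_mono (Q.set_subset_ball hQ.le)).trans (hgrow _ _ (by positivity)))
  have hcont : Continuous (s t x) :=
    continuous_of_abs_sub_le_mul_rpow hα (half_pos ht₀) (K := C / t ^ (m + α))
      fun y z hyz => (hs t x y z ht₀ hyz).trans (by
        rw [mul_div_right_comm]
        gcongr
        linarith [dist_nonneg (x := x) (y := y)])
  have hkernel : ∀ y ∈ Q.set,
      |s t x y - s t x Q.c| ≤ (4 * n + 4) * (4 ^ (m + α) * C * Q.l ^ α / DD Q R ^ (m + α)) :=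
    fun y hy => Q.abs_sub_le_of_holder hQ hQR hx ht hα.le (by positivity) hC.le
      (fun y z => hs t x y z ht₀) hy
  have hsplit : Q.l ^ α ≤ Q.l ^ (α / 2) * R.l ^ (α / 2) :=
    calc Q.l ^ α = Q.l ^ (α / 2) * Q.l ^ (α / 2) := by rw [← Real.rpow_add hQ, add_halves]
      _ ≤ Q.l ^ (α / 2) * R.l ^ (α / 2) := by gcongr
  calc |∫ y, s t x y * g y ∂μ|
      ≤ (4 * n + 4) * (4 ^ (m + α) * C * Q.l ^ α / DD Q R ^ (m + α)) * ∫ y, |g y| ∂μ :=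
        abs_integral_mul_le_of_integral_eq_zero hcont.aestronglyMeasurable
          (hg.integrable_of_eq_zero_off hQm hμQ hsupp) hmean hsupp hkernel
    _ ≤ (4 * n + 4) * (4 ^ (m + α) * C * (Q.l ^ (α / 2) * R.l ^ (α / 2)) / DD Q R ^ (m + α))
          * (√(μ Q.set).toReal * √(∫ y, g y ^ 2 ∂μ)) := by
        have := DD_pos hQ hR
        gcongr
        exact integral_abs_le_sqrt_measure_mul_sqrt_integral_sq hQm hμQ hg hsupp
    _ = _ := by ring
end

section
/- Let $0 < \gamma = \alpha/(2m+2\alpha)$ and let $Q, R$ be cubes with $\ell(R) \le \ell(Q)$ and $d(Q,R) > \ell(R)^{\gamma}\ell(Q)^{1-\gamma}$. Then $\frac{\ell(R)^{\alpha}}{d(Q,R)^{m+\alpha}} \le C\,\frac{\ell(Q)^{\alpha/2}\ell(R)^{\alpha/2}}{D(Q,R)^{m+\alpha}}$, where $D(Q,R) = \ell(Q)+\ell(R)+d(Q,R)$ and $C$ depends only on $m$ and $\alpha$. -/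
open MeasureTheory Set
open scoped ENNReal NNReal

/-- The separation inequality (eq:sep of the paper): with
`γ = α/(2m+2α)`, if `ℓ(R) ≤ ℓ(Q)` and `d(Q,R) > ℓ(R)^γ ℓ(Q)^{1-γ}`, then
`ℓ(R)^α d(Q,R)^{-(m+α)} ≤ C · ℓ(Q)^{α/2} ℓ(R)^{α/2} D(Q,R)^{-(m+α)}` with `C = C(m,α)`. -/
theorem stmt10 (m α : ℝ) (hm : 0 < m) (hα : 0 < α) :
    ∃ C : ℝ, 0 < C ∧
    ∀ (n : ℕ) (Q R : RCube n), 0 < Q.l → 0 < R.l → R.l ≤ Q.l →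
    sDist Q.set R.set > R.l ^ (α / (2 * m + 2 * α)) * Q.l ^ (1 - α / (2 * m + 2 * α)) →
    R.l ^ α / (sDist Q.set R.set) ^ (m + α)
      ≤ C * (Q.l ^ (α / 2) * R.l ^ (α / 2) / (DD Q R) ^ (m + α)) := by
  refine ⟨3 ^ (m + α), by positivity, ?_⟩
  intro n Q R hQ hR hRQ hsep
  set lQ := Q.l with hlQ
  set lR := R.l with hlR
  set d := sDist Q.set R.set with hdd
  have hma : 0 < m + α := by linarith
  have hd0 : 0 < d := lt_trans (by positivity) hsep
  have hD0 : 0 < DD Q R := by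
    have : DD Q R = lQ + lR + d := rfl
    rw [this]; linarith
  have hdp : 0 < d ^ (m + α) := Real.rpow_pos_of_pos hd0 _
  have hDp : 0 < DD Q R ^ (m + α) := Real.rpow_pos_of_pos hD0 _
  have hRhalf : lR ^ α = lR ^ (α / 2) * lR ^ (α / 2) := by
    rw [← Real.rpow_add hR]; ring_nf
  have hRQhalf : lR ^ (α / 2) ≤ lQ ^ (α / 2) :=
    Real.rpow_le_rpow hR.le hRQ (by positivity)
  rw [← mul_div_assoc, div_le_div_iff₀ hdp hDp]
  by_cases hcase : lQ ≤ d
  · -- D ≤ 3d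
    have hD3 : DD Q R ≤ 3 * d := by
      have : DD Q R = lQ + lR + d := rfl
      rw [this]; linarith
    have hDd : DD Q R ^ (m + α) ≤ 3 ^ (m + α) * d ^ (m + α) := by
      calc DD Q R ^ (m + α) ≤ (3 * d) ^ (m + α) :=
            Real.rpow_le_rpow hD0.le hD3 hma.le
        _ = 3 ^ (m + α) * d ^ (m + α) := Real.mul_rpow (by norm_num) hd0.le
    have hnum : lR ^ α ≤ lQ ^ (α / 2) * lR ^ (α / 2) := by
      rw [hRhalf]
      exact mul_le_mul_of_nonneg_right hRQhalf (by positivity)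
    calc lR ^ α * DD Q R ^ (m + α)
        ≤ (lQ ^ (α / 2) * lR ^ (α / 2)) * (3 ^ (m + α) * d ^ (m + α)) := by
          apply mul_le_mul hnum hDd hDp.le (by positivity)
      _ = 3 ^ (m + α) * (lQ ^ (α / 2) * lR ^ (α / 2)) * d ^ (m + α) := by ring
  · -- d < lQ, D ≤ 3 lQ
    push_neg at hcase
    have hD3 : DD Q R ≤ 3 * lQ := by
      have : DD Q R = lQ + lR + d := rfl
      rw [this]; linarith
    have hDQ : DD Q R ^ (m + α) ≤ 3 ^ (m + α) * lQ ^ (m + α) := by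
      calc DD Q R ^ (m + α) ≤ (3 * lQ) ^ (m + α) :=
            Real.rpow_le_rpow hD0.le hD3 hma.le
        _ = 3 ^ (m + α) * lQ ^ (m + α) := Real.mul_rpow (by norm_num) hQ.le
    set γ := α / (2 * m + 2 * α) with hγ
    have hne : (2 * m + 2 * α) ≠ 0 := by positivity
    have hg1 : γ * (m + α) = α / 2 := by rw [hγ]; field_simp
    have hg2 : (1 - γ) * (m + α) = m + α / 2 := by rw [hγ]; field_simp; ring
    have hdsep : lR ^ (α / 2) * lQ ^ (m + α / 2) ≤ d ^ (m + α) := by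
      have h1 : (lR ^ γ * lQ ^ (1 - γ)) ^ (m + α) ≤ d ^ (m + α) :=
        Real.rpow_le_rpow (by positivity) hsep.le hma.le
      calc lR ^ (α / 2) * lQ ^ (m + α / 2)
          = lR ^ (γ * (m + α)) * lQ ^ ((1 - γ) * (m + α)) := by rw [hg1, hg2]
        _ = (lR ^ γ) ^ (m + α) * (lQ ^ (1 - γ)) ^ (m + α) := by
            rw [Real.rpow_mul hR.le, Real.rpow_mul hQ.le]
        _ = (lR ^ γ * lQ ^ (1 - γ)) ^ (m + α) :=
            (Real.mul_rpow (by positivity) (by positivity)).symm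
        _ ≤ d ^ (m + α) := h1
    have hQsplit : lQ ^ (m + α) = lQ ^ (α / 2) * lQ ^ (m + α / 2) := by
      rw [← Real.rpow_add hQ]; ring_nf
    calc lR ^ α * DD Q R ^ (m + α)
        ≤ lR ^ α * (3 ^ (m + α) * lQ ^ (m + α)) :=
          mul_le_mul_of_nonneg_left hDQ (by positivity)
      _ = 3 ^ (m + α) * (lQ ^ (α / 2) * lR ^ (α / 2)) * (lR ^ (α / 2) * lQ ^ (m + α / 2)) := by
          rw [hRhalf, hQsplit]; ring
      _ ≤ 3 ^ (m + α) * (lQ ^ (α / 2) * lR ^ (α / 2)) * d ^ (m + α) :=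
          mul_le_mul_of_nonneg_left hdsep (by positivity)
end
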